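/- arXiv:1009.0914 — 3 statements merged into one kernel-verified Lean document; each statement's English description precedes it below -/
import Mathlib

section
/- With f_d and n_h related by ∑_{d≥0} f_d q^d = ∑_{h≤g} n_h q^{g-h}(1-q)^{2h-2}, the coefficients n_h vanish for all h < 0 if and only if there exists an integer c such that f_d − f_{2g−2−d} = c·(d+1−g) for all d ≥ 0 (where f_e is taken to be 0 for e < 0); in that case c = n_0. -/
/-- The unit `1 - q` of `ℤ⟦q⟧`. -/
noncomputable def oneSubX : (PowerSeries ℤ)ˣ :=
  (show IsUnit (1 - PowerSeries.X : PowerSeries ℤ) from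
    PowerSeries.isUnit_iff_constantCoeff.mpr
      (by rw [map_sub, PowerSeries.constantCoeff_X, map_one, sub_zero]; exact isUnit_one)).unit

/-- The series `∑_{h ≤ g} n_h q^{g-h} (1-q)^{2h-2}`, reindexed by `m = g - h` (so the
sequence `n : ℕ → ℤ` records `n (g - h) = n_h`).  It is defined coefficientwise:
the coefficient of `q^d` is the (finite) sum of the contributions of the terms
`n_{g-m} q^m (1-q)^{2(g-m)-2}` for `m ≤ d`. -/
noncomputable def expansionSeries (g : ℤ) (n : ℕ → ℤ) : PowerSeries ℤ :=
  PowerSeries.mk fun d => ∑ m ∈ Finset.range (d + 1),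
    n m * PowerSeries.coeff (R := ℤ) (d - m)
      ((oneSubX ^ (2 * (g - m) - 2) : (PowerSeries ℤ)ˣ) : PowerSeries ℤ)

/-!
Split `n` at `g` (i.e. at `h = 0`). For `m < g` the term `q^m (1-q)^{2(g-m)-2}` is a polynomial
whose coefficients are symmetric under `d ↦ 2g-2-d`, and `q^g (1-q)^{-2} = ∑ (j+1) q^{g+j}` has
`coeff_d - coeff_{2g-2-d} = d+1-g`; so the part with `h ≥ 0` contributes exactly `n_0 (d+1-g)` to
`f_d - f_{2g-2-d}`. The part `ψ` with `h < 0` has no coefficients in degrees `≤ g`, so its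
contribution vanishes at `d = g` (forcing `c = n_0`), and in general it is `±` the coefficient of
`ψ` in degree `max(d, 2g-2-d)`. Hence the condition holds iff `ψ = 0`, iff all `n_h` with `h < 0`
vanish, since every `(1-q)^{2h-2}` has constant term `1`.
-/

open PowerSeries

section coeffInt

variable {R : Type*} [CommRing R]

/-- The paper's convention `f_e = 0` for `e < 0`, as a coefficient functional. -/
noncomputable def coeffInt (e : ℤ) : R⟦X⟧ →ₗ[R] R := if 0 ≤ e then coeff e.toNat else 0

lemma coeffInt_natCast (d : ℕ) (φ : R⟦X⟧) : coeffInt (d : ℤ) φ = coeff d φ := by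
  simp [coeffInt]

lemma coeffInt_of_neg {e : ℤ} (he : e < 0) (φ : R⟦X⟧) : coeffInt e φ = 0 := by
  simp [coeffInt, not_le.mpr he]

lemma coeffInt_X_pow_mul (m : ℕ) (e : ℤ) (φ : R⟦X⟧) :
    coeffInt e (X ^ m * φ) = coeffInt (e - m) φ := by
  rcases lt_or_ge e m with he | he
  · rcases lt_or_ge e 0 with he' | he'
    · rw [coeffInt_of_neg he', coeffInt_of_neg (by omega)]
    · rw [coeffInt_of_neg (show e - m < 0 by omega), ← e.toNat_of_nonneg he', coeffInt_natCast,
        coeff_X_pow_mul', if_neg (by omega)]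
  · obtain ⟨d, rfl⟩ : ∃ d : ℕ, e = ↑(d + m) := ⟨e.toNat - m, by omega⟩
    rw [coeffInt_natCast, Nat.cast_add, add_sub_cancel_right, coeffInt_natCast,
      coeff_X_pow_mul]

lemma coeff_one_sub_X_pow (k j : ℕ) :
    coeff j ((1 - X : R⟦X⟧) ^ k) = (-1) ^ j * k.choose j := by
  induction k generalizing j with
  | zero => cases j <;> simp [coeff_one]
  | succ k ih =>
    rw [pow_succ, mul_one_sub, map_sub]
    cases j with
    | zero => simp [ih]
    | succ j =>
      rw [coeff_succ_mul_X, ih, ih, Nat.choose_succ_succ']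
      push_cast
      ring

lemma coeffInt_one_sub_X_pow_sub {k : ℕ} (hk : Even k) (e : ℤ) :
    coeffInt (k - e) ((1 - X : R⟦X⟧) ^ k) = coeffInt e ((1 - X : R⟦X⟧) ^ k) := by
  rcases lt_or_ge e 0 with he | he
  · obtain ⟨j, hj⟩ : ∃ j : ℕ, (k : ℤ) - e = j := ⟨(k - e).toNat, by omega⟩
    rw [coeffInt_of_neg he, hj, coeffInt_natCast, coeff_one_sub_X_pow,
      Nat.choose_eq_zero_of_lt (by omega), Nat.cast_zero, mul_zero]
  obtain ⟨j, rfl⟩ : ∃ j : ℕ, e = j := ⟨e.toNat, by omega⟩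
  rcases lt_or_ge k j with hjk | hjk
  · rw [coeffInt_of_neg (by omega), coeffInt_natCast, coeff_one_sub_X_pow,
      Nat.choose_eq_zero_of_lt hjk, Nat.cast_zero, mul_zero]
  · have hsign : ((-1 : R)) ^ (k - j) = (-1) ^ j := by
      obtain ⟨r, rfl⟩ := hk
      rw [neg_one_pow_eq_pow_mod_two, neg_one_pow_eq_pow_mod_two (n := j)]
      congr 1
      omega
    rw [← Nat.cast_sub hjk, coeffInt_natCast, coeffInt_natCast, coeff_one_sub_X_pow,
      coeff_one_sub_X_pow, Nat.choose_symm hjk, hsign]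

lemma coeffInt_invOneSubPow_two_sub (e : ℤ) :
    coeffInt e (invOneSubPow R 2 : R⟦X⟧) - coeffInt (-2 - e) (invOneSubPow R 2 : R⟦X⟧) = e + 1 := by
  have hcoeff : ∀ j : ℕ, coeff j (invOneSubPow R 2 : R⟦X⟧) = j + 1 := fun j => by
    simp [invOneSubPow_val_succ_eq_mk_add_choose (S := R) (d := 1), add_comm]
  rcases lt_trichotomy e (-1) with he | rfl | he
  · obtain ⟨j, hj⟩ : ∃ j : ℕ, -2 - e = j := ⟨(-2 - e).toNat, by omega⟩
    rw [coeffInt_of_neg (by omega), hj, coeffInt_natCast, hcoeff]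
    have : e = -2 - j := by omega
    subst this
    push_cast
    ring
  · rw [show (-2 : ℤ) - -1 = -1 by norm_num, sub_self]
    norm_num
  · obtain ⟨j, rfl⟩ : ∃ j : ℕ, e = j := ⟨e.toNat, by omega⟩
    rw [coeffInt_natCast, hcoeff, coeffInt_of_neg (by omega), sub_zero]
    push_cast
    ring

lemma forall_coeff_sub_reflect_eq_mul_iff {g : ℕ} {φ : R⟦X⟧} (hφ : ∀ d ≤ g, coeff d φ = 0) (a : R) :
    (∀ d : ℕ, coeff d φ - coeffInt (2 * g - 2 - d) φ = a * ((d : ℤ) + 1 - g)) ↔ a = 0 ∧ φ = 0 := by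
  have hlow (e : ℤ) (he : e ≤ g) : coeffInt e φ = 0 := by
    rcases lt_or_ge e 0 with he' | he'
    · exact coeffInt_of_neg he' φ
    · rw [← e.toNat_of_nonneg he', coeffInt_natCast, hφ _ (by omega)]
  constructor
  · intro h
    have ha : a = 0 := by simpa [hφ g le_rfl, hlow (2 * g - 2 - g) (by omega)] using (h g).symm
    refine ⟨ha, ext fun d => ?_⟩
    rcases le_or_gt d g with hd | hd
    · exact hφ d hd
    · simpa [ha, hlow (2 * g - 2 - d) (by omega)] using h d
  · rintro ⟨rfl, rfl⟩ d
    simp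

end coeffInt

lemma oneSubX_val : (oneSubX : ℤ⟦X⟧) = 1 - X := IsUnit.unit_spec _

lemma oneSubX_zpow_natCast (k : ℕ) : ((oneSubX ^ (k : ℤ) : ℤ⟦X⟧ˣ) : ℤ⟦X⟧) = (1 - X) ^ k := by
  rw [zpow_natCast, Units.val_pow_eq_pow_val, oneSubX_val]

lemma oneSubX_zpow_neg_two : ((oneSubX ^ (-2 : ℤ) : ℤ⟦X⟧ˣ) : ℤ⟦X⟧) = invOneSubPow ℤ 2 := by
  congr 1
  rw [show (-2 : ℤ) = -(2 : ℕ) by rfl, zpow_neg, zpow_natCast, inv_eq_iff_eq_inv]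
  ext1
  rw [Units.val_pow_eq_pow_val, oneSubX_val, ← invOneSubPow_inv_eq_one_sub_pow]
  rfl

lemma constantCoeff_oneSubX_zpow (k : ℤ) : constantCoeff ((oneSubX ^ k : ℤ⟦X⟧ˣ) : ℤ⟦X⟧) = 1 := by
  have hunit : Units.map constantCoeff.toMonoidHom oneSubX = 1 := by
    ext1
    simp [oneSubX_val]
  change ((Units.map constantCoeff.toMonoidHom (oneSubX ^ k) : ℤˣ) : ℤ) = 1
  rw [map_zpow, hunit, one_zpow, Units.val_one]

lemma expansionSeries_add (g : ℤ) (n₁ n₂ : ℕ → ℤ) :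
    expansionSeries g (n₁ + n₂) = expansionSeries g n₁ + expansionSeries g n₂ := by
  ext d
  simp only [expansionSeries, coeff_mk, map_add, Pi.add_apply, add_mul, Finset.sum_add_distrib]

lemma coeff_expansionSeries_eq_zero {g : ℤ} {n : ℕ → ℤ} {d : ℕ} (hn : ∀ m ≤ d, n m = 0) :
    coeff d (expansionSeries g n) = 0 := by
  rw [expansionSeries, coeff_mk]
  exact Finset.sum_eq_zero fun m hm => by rw [hn m (Finset.mem_range_succ_iff.mp hm), zero_mul]

lemma expansionSeries_eq_zero_iff {g : ℤ} {n : ℕ → ℤ} : expansionSeries g n = 0 ↔ n = 0 := by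
  refine ⟨fun h => funext fun d => ?_, fun h => ext fun d => coeff_expansionSeries_eq_zero ?_⟩
  · induction d using Nat.strong_induction_on with
    | _ d ih =>
      have hd := congrArg (coeff d) h
      rw [expansionSeries, coeff_mk, Finset.sum_range_succ, Finset.sum_eq_zero fun m hm =>
        by simp [ih m (Finset.mem_range.mp hm)], Nat.sub_self, coeff_zero_eq_constantCoeff_apply,
        constantCoeff_oneSubX_zpow] at hd
      simpa using hd
  · simp [h]

lemma expansionSeries_eq_sum {g : ℤ} {n : ℕ → ℤ} {N : ℕ} (hn : ∀ m, N ≤ m → n m = 0) :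
    expansionSeries g n =
      ∑ m ∈ Finset.range N, n m • (X ^ m * ((oneSubX ^ (2 * (g - m) - 2) : ℤ⟦X⟧ˣ) : ℤ⟦X⟧)) := by
  ext d
  rw [expansionSeries, coeff_mk, map_sum]
  simp only [LinearMap.map_smul_of_tower, coeff_X_pow_mul', smul_eq_mul, mul_ite, mul_zero]
  simp only [← Finset.mem_range_succ_iff, Finset.sum_ite_mem]
  refine (Finset.sum_subset Finset.inter_subset_right fun m hm hmN => ?_).symm
  rw [hn m (by simp only [Finset.mem_inter, Finset.mem_range] at hm hmN; omega), zero_mul]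

lemma coeffInt_sub_reflect_expansionSeries_of_vanishing {g : ℕ} {n : ℕ → ℤ}
    (hn : ∀ m, g < m → n m = 0) (d : ℤ) :
    coeffInt d (expansionSeries g n) - coeffInt (2 * g - 2 - d) (expansionSeries g n) =
      n g * (d + 1 - g) := by
  rw [expansionSeries_eq_sum (N := g + 1) hn, ← LinearMap.sub_apply, map_sum,
    Finset.sum_range_succ, Finset.sum_eq_zero fun m hm => ?_, zero_add]
  · rw [sub_self, mul_zero, zero_sub, oneSubX_zpow_neg_two, map_smul, LinearMap.sub_apply,
      coeffInt_X_pow_mul, coeffInt_X_pow_mul, show 2 * (g : ℤ) - 2 - d - g = -2 - (d - g) by ring,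
      coeffInt_invOneSubPow_two_sub, smul_eq_mul, Int.cast_id]
    ring
  · have hm : m < g := Finset.mem_range.mp hm
    have hk : 2 * ((g : ℤ) - m) - 2 = ((2 * (g - m - 1) : ℕ) : ℤ) := by omega
    rw [hk, oneSubX_zpow_natCast, map_smul, LinearMap.sub_apply, coeffInt_X_pow_mul,
      coeffInt_X_pow_mul, show 2 * (g : ℤ) - 2 - d - m = ((2 * (g - m - 1) : ℕ) : ℤ) - (d - m) by omega,
      coeffInt_one_sub_X_pow_sub (even_two_mul _), sub_self, smul_zero]

lemma coeffInt_sub_reflect_expansionSeries (g : ℕ) (n : ℕ → ℤ) (d : ℤ) :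
    coeffInt d (expansionSeries g n) - coeffInt (2 * g - 2 - d) (expansionSeries g n) =
      n g * (d + 1 - g) +
        (coeffInt d (expansionSeries g ((Set.Iic g)ᶜ.indicator n)) -
          coeffInt (2 * g - 2 - d) (expansionSeries g ((Set.Iic g)ᶜ.indicator n))) := by
  have hlow := coeffInt_sub_reflect_expansionSeries_of_vanishing (n := (Set.Iic g).indicator n)
    (fun m hm => Set.indicator_of_notMem (by simpa using hm) n) d
  rw [Set.indicator_of_mem (Set.mem_Iic.mpr le_rfl)] at hlow
  conv_lhs => rw [← Set.indicator_self_add_compl (Set.Iic g) n, expansionSeries_add]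
  rw [map_add, map_add, ← hlow]
  ring

/-- With `∑ f_d q^d = ∑_{h≤g} n_h q^{g-h}(1-q)^{2h-2}` (here `n m` records `n_{g-m}`,
so "`n_h = 0` for `h < 0`" reads "`n m = 0` for `m > g`"), the coefficients `n_h`
vanish for all `h < 0` iff there is `c : ℤ` with `f_d - f_{2g-2-d} = c (d+1-g)` for
all `d ≥ 0`, where `f_e = 0` for `e < 0`; in that case `c = n_0`. -/
theorem expansion_vanishing_iff (g : ℕ) (f n : ℕ → ℤ)
    (h : PowerSeries.mk f = expansionSeries g n)
    (fext : ℤ → ℤ) (hfext : ∀ d : ℤ, fext d = if 0 ≤ d then f d.toNat else 0) :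
    ((∀ m : ℕ, g < m → n m = 0) ↔
      ∃ c : ℤ, ∀ d : ℕ, f d - fext (2 * g - 2 - d) = c * ((d : ℤ) + 1 - g)) ∧
    ∀ c : ℤ, (∀ m : ℕ, g < m → n m = 0) →
      (∀ d : ℕ, f d - fext (2 * g - 2 - d) = c * ((d : ℤ) + 1 - g)) → c = n g := by
  set tail : ℕ → ℤ := (Set.Iic g)ᶜ.indicator n
  have htail : tail = 0 ↔ ∀ m, g < m → n m = 0 := by
    simp [tail, funext_iff, Set.indicator_apply]
  have hlow : ∀ d ≤ g, coeff d (expansionSeries g tail) = 0 := fun d hd =>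
    coeff_expansionSeries_eq_zero fun m hm => Set.indicator_of_notMem (by simp; omega) n
  have hfext_coeffInt (e : ℤ) : fext e = coeffInt e (PowerSeries.mk f) := by
    rw [hfext, coeffInt]
    split_ifs <;> simp
  have hiff (c : ℤ) : (∀ d : ℕ, f d - fext (2 * g - 2 - d) = c * ((d : ℤ) + 1 - g)) ↔
      c = n g ∧ ∀ m, g < m → n m = 0 := by
    rw [← sub_eq_zero (a := c), ← htail, ← expansionSeries_eq_zero_iff (g := g),
      ← forall_coeff_sub_reflect_eq_mul_iff hlow]
    refine forall_congr' fun d => ?_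
    rw [hfext_coeffInt, ← coeff_mk d f, ← coeffInt_natCast, h, coeffInt_sub_reflect_expansionSeries,
      coeffInt_natCast, Int.cast_id, sub_mul, eq_sub_iff_add_eq']
  exact ⟨⟨fun hv => ⟨n g, (hiff (n g)).2 ⟨rfl, hv⟩⟩, fun ⟨c, hc⟩ => ((hiff c).1 hc).2⟩,
    fun c _ hc => ((hiff c).1 hc).1⟩
end

section
/- For the A_{2δ-1} singularity (y² = x^{2δ}), with multiplicities n_h = C(δ+h, δ-h) for 0 ≤ h ≤ δ, for all 0 ≤ n ≤ δ the coefficient of q^n in ∑_{h=0}^{δ} C(δ+h, δ-h) q^{δ-h}(1-q)^{2h} equals the coefficient of q^n in (1-q)²/((1-q)(1-q²)) = 1/(1+q). -/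
open PowerSeries Finset

/-- The generating sum for the `A_{2δ-1}` multiplicities. -/
noncomputable def ppAodd (δ : ℕ) : PowerSeries ℤ :=
  ∑ h ∈ Finset.range (δ + 1),
    PowerSeries.C (R := ℤ) (((δ + h).choose (δ - h) : ℕ) : ℤ) *
      PowerSeries.X ^ (δ - h) * (1 - PowerSeries.X) ^ (2 * h)

lemma pascal2Aodd (a k : ℕ) :
    (a+1+1).choose (k+1+1) + a.choose k = 2 * (a+1).choose (k+1) + a.choose (k+1+1) := by
  have h1 := Nat.choose_succ_succ (a+1) (k+1)
  have h2 := Nat.choose_succ_succ a k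
  have h3 := Nat.choose_succ_succ a (k+1)
  simp only [Nat.succ_eq_add_one] at h1 h2 h3
  omega

/-- auxiliary shifted sequence -/
noncomputable def BBAodd (δ : ℕ) : ℕ → PowerSeries ℤ
  | 0 => 0
  | (j+1) => PowerSeries.C (R := ℤ) (((δ+1+j).choose (δ+1-j) : ℕ) : ℤ) *
      PowerSeries.X ^ (δ+1-j) * (1 - PowerSeries.X) ^ (2*j+2)

lemma ppAodd_rec (δ : ℕ) :
    ppAodd (δ+2) = (1 + PowerSeries.X^2) * ppAodd (δ+1) - PowerSeries.X^2 * ppAodd δ := by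
  have hS1 : (1 + PowerSeries.X^2) * ppAodd (δ+1) =
      (∑ h ∈ Finset.range (δ+2), PowerSeries.C (R := ℤ) (((δ+1+h).choose (δ+1-h) : ℕ) : ℤ) *
          (2 * PowerSeries.X ^ (δ+2-h)) * (1 - PowerSeries.X)^(2*h))
      + ∑ h ∈ Finset.range (δ+2), PowerSeries.C (R := ℤ) (((δ+1+h).choose (δ+1-h) : ℕ) : ℤ) *
          PowerSeries.X ^ (δ+1-h) * (1 - PowerSeries.X)^(2*h+2) := by
    rw [ppAodd, Finset.mul_sum, ← Finset.sum_add_distrib]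
    refine Finset.sum_congr rfl fun h hh => ?_
    have hle : h ≤ δ+1 := by have := Finset.mem_range.mp hh; omega
    rw [show δ+2-h = (δ+1-h)+1 from by omega, pow_succ,
      pow_add (1 - PowerSeries.X) (2*h) 2]
    ring
  have hS3 : PowerSeries.X^2 * ppAodd δ =
      ∑ h ∈ Finset.range (δ+1), PowerSeries.C (R := ℤ) (((δ+h).choose (δ-h) : ℕ) : ℤ) *
        PowerSeries.X ^ (δ+2-h) * (1 - PowerSeries.X)^(2*h) := by
    rw [ppAodd, Finset.mul_sum]
    refine Finset.sum_congr rfl fun h hh => ?_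
    have hle : h ≤ δ := by have := Finset.mem_range.mp hh; omega
    rw [show δ+2-h = (δ-h)+2 from by omega, pow_add]
    ring
  have hshift : (∑ h ∈ Finset.range (δ+2+1), BBAodd δ h) =
      ∑ h ∈ Finset.range (δ+2), PowerSeries.C (R := ℤ) (((δ+1+h).choose (δ+1-h) : ℕ) : ℤ) *
        PowerSeries.X ^ (δ+1-h) * (1 - PowerSeries.X)^(2*h+2) := by
    rw [Finset.sum_range_succ']
    simp [BBAodd]
  have p1 : (∑ h ∈ Finset.range (δ+2+1),
      (if h ≤ δ+1 then PowerSeries.C (R := ℤ) (((δ+1+h).choose (δ+1-h) : ℕ) : ℤ) *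
          (2 * PowerSeries.X ^ (δ+2-h)) * (1 - PowerSeries.X)^(2*h) else 0)) =
      ∑ h ∈ Finset.range (δ+2), PowerSeries.C (R := ℤ) (((δ+1+h).choose (δ+1-h) : ℕ) : ℤ) *
          (2 * PowerSeries.X ^ (δ+2-h)) * (1 - PowerSeries.X)^(2*h) := by
    rw [Finset.sum_range_succ, if_neg (by omega), add_zero]
    exact Finset.sum_congr rfl fun h hh => if_pos (by have := Finset.mem_range.mp hh; omega)
  have p3 : (∑ h ∈ Finset.range (δ+2+1),
      (if h ≤ δ then PowerSeries.C (R := ℤ) (((δ+h).choose (δ-h) : ℕ) : ℤ) *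
          PowerSeries.X ^ (δ+2-h) * (1 - PowerSeries.X)^(2*h) else 0)) =
      ∑ h ∈ Finset.range (δ+1), PowerSeries.C (R := ℤ) (((δ+h).choose (δ-h) : ℕ) : ℤ) *
          PowerSeries.X ^ (δ+2-h) * (1 - PowerSeries.X)^(2*h) := by
    rw [Finset.sum_range_succ, if_neg (by omega), add_zero,
      Finset.sum_range_succ, if_neg (by omega), add_zero]
    exact Finset.sum_congr rfl fun h hh => if_pos (by have := Finset.mem_range.mp hh; omega)
  rw [hS1, hS3, ← hshift, ← p1, ← p3, ppAodd, ← Finset.sum_add_distrib,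
    ← Finset.sum_sub_distrib]
  refine Finset.sum_congr rfl fun h hh => ?_
  have hlt : h < δ+2+1 := Finset.mem_range.mp hh
  rcases h with _ | j
  · rw [if_pos (Nat.zero_le (δ+1)), if_pos (Nat.zero_le δ)]
    simp only [BBAodd, Nat.add_zero, Nat.sub_zero, Nat.choose_self, Nat.cast_one, map_one,
      mul_zero, Nat.mul_zero, pow_zero, mul_one, add_zero]
    ring
  · by_cases hj : j+1 ≤ δ
    · obtain ⟨k, rfl⟩ : ∃ k, δ = j+1+k := ⟨δ-(j+1), by omega⟩
      rw [if_pos (show j+1 ≤ j+1+k+1 from by omega), if_pos (show j+1 ≤ j+1+k from by omega)]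
      simp only [BBAodd]
      simp only [show j+1+k+2+(j+1) = (2*j+k+2)+1+1 from by omega,
        show j+1+k+2-(j+1) = k+1+1 from by omega,
        show j+1+k+1+(j+1) = (2*j+k+2)+1 from by omega,
        show j+1+k+1-(j+1) = k+1 from by omega,
        show j+1+k+1+j = 2*j+k+2 from by omega,
        show j+1+k+1-j = k+1+1 from by omega,
        show j+1+k+(j+1) = 2*j+k+2 from by omega,
        show j+1+k-(j+1) = k from by omega,
        show 2*(j+1) = 2*j+2 from by omega]
      have hco := pascal2Aodd (2*j+k+2) k
      have hcoZ : ((((2*j+k+2)+1+1).choose (k+1+1) : ℕ) : ℤ) =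
          2 * ((((2*j+k+2)+1).choose (k+1) : ℕ) : ℤ)
          + (((2*j+k+2).choose (k+1+1) : ℕ) : ℤ)
          - (((2*j+k+2).choose k : ℕ) : ℤ) := by
        omega
      rw [hcoZ, map_sub, map_add, map_mul, map_ofNat]
      ring
    · rw [if_neg (show ¬(j+1 ≤ δ) from hj), sub_zero]
      by_cases hj2 : j = δ
      · subst hj2
        rw [if_pos (le_refl (j+1))]
        simp only [BBAodd]
        simp only [show j+2+(j+1) = 2*j+3 from by omega,
          show j+2-(j+1) = 1 from by omega,
          show j+1+(j+1) = 2*j+2 from by omega,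
          show j+1-(j+1) = 0 from by omega,
          show j+1+j = 2*j+1 from by omega,
          show j+1-j = 1 from by omega,
          show 2*(j+1) = 2*j+2 from by omega,
          Nat.choose_one_right, Nat.choose_zero_right, Nat.cast_one, map_one]
        rw [show ((2*j+3 : ℕ) : ℤ) = 2 + ((2*j+1 : ℕ) : ℤ) from by push_cast; ring,
          map_add, map_ofNat]
        ring
      · have hj3 : j = δ+1 := by omega
        subst hj3
        rw [if_neg (show ¬(δ+1+1 ≤ δ+1) from by omega), zero_add]
        simp only [BBAodd]
        simp only [show δ+2+(δ+1+1) = 2*δ+4 from by omega,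
          show δ+2-(δ+1+1) = 0 from by omega,
          show δ+1+(δ+1) = 2*δ+2 from by omega,
          show δ+1-(δ+1) = 0 from by omega,
          show 2*(δ+1+1) = 2*δ+4 from by omega,
          show 2*(δ+1)+2 = 2*δ+4 from by omega,
          Nat.choose_zero_right, Nat.cast_one, map_one, pow_zero, one_mul, mul_one]

lemma keyAodd (δ : ℕ) :
    (1 + PowerSeries.X) * ppAodd δ = 1 + PowerSeries.X ^ (2*δ+1) := by
  induction δ using Nat.strong_induction_on with
  | _ δ ih =>
    match δ with
    | 0 =>
      rw [ppAodd]
      simp [Finset.sum_range_one]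
    | 1 =>
      rw [ppAodd]
      rw [Finset.sum_range_succ, Finset.sum_range_one]
      norm_num
      ring
    | (d+2) =>
      have h1 := ih (d+1) (by omega)
      have h2 := ih d (by omega)
      calc (1 + PowerSeries.X) * ppAodd (d+2)
          = (1 + PowerSeries.X^2) * ((1 + PowerSeries.X) * ppAodd (d+1))
            - PowerSeries.X^2 * ((1 + PowerSeries.X) * ppAodd d) := by
            rw [ppAodd_rec]; ring
        _ = (1 + PowerSeries.X^2) * (1 + PowerSeries.X ^ (2*(d+1)+1))
            - PowerSeries.X^2 * (1 + PowerSeries.X ^ (2*d+1)) := by rw [h1, h2]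
        _ = 1 + PowerSeries.X ^ (2*(d+2)+1) := by
            rw [show 2*(d+1)+1 = (2*d+1)+2 from by ring,
              show 2*(d+2)+1 = (2*d+1)+4 from by ring, pow_add, pow_add]
            ring

lemma einvAodd :
    (1 + PowerSeries.X) * PowerSeries.mk (fun n => (-1 : ℤ)^n) = 1 := by
  ext n
  rw [add_mul, one_mul, map_add]
  cases n with
  | zero => simp
  | succ m => simp [PowerSeries.coeff_succ_X_mul, PowerSeries.coeff_one, pow_succ]

lemma cardAodd (k : ℕ) :
    ((Finset.range (k + 1) ×ˢ Finset.range (k + 1)).filter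
      (fun p => p.1 + 2 * p.2 = k)).card = k/2 + 1 := by
  have himg : ((Finset.range (k + 1) ×ˢ Finset.range (k + 1)).filter
      (fun p => p.1 + 2 * p.2 = k)) = (Finset.range (k/2 + 1)).image (fun b => (k - 2*b, b)) := by
    ext ⟨a, b⟩
    simp only [Finset.mem_filter, Finset.mem_product, Finset.mem_range, Finset.mem_image,
      Prod.mk.injEq]
    constructor
    · rintro ⟨⟨ha, hb⟩, hab⟩
      exact ⟨b, by omega, by omega, rfl⟩
    · rintro ⟨x, hx, h1, rfl⟩
      omega
  rw [himg, Finset.card_image_of_injective _ (fun x y hxy => congrArg Prod.snd hxy),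
    Finset.card_range]

lemma cinvAodd :
    (1 + PowerSeries.X) * ((1 - PowerSeries.X)^2 *
      PowerSeries.mk (fun k =>
        ((((Finset.range (k + 1) ×ˢ Finset.range (k + 1)).filter
          (fun p => p.1 + 2 * p.2 = k)).card : ℕ) : ℤ))) = 1 := by
  have hc : PowerSeries.mk (fun k =>
      ((((Finset.range (k + 1) ×ˢ Finset.range (k + 1)).filter
        (fun p => p.1 + 2 * p.2 = k)).card : ℕ) : ℤ)) =
      PowerSeries.mk (fun k => ((k/2 + 1 : ℕ) : ℤ)) := by
    ext m
    simp [cardAodd]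
  rw [hc]
  have hring : (1 + PowerSeries.X) * ((1 - PowerSeries.X)^2 *
      PowerSeries.mk (fun k => ((k/2 + 1 : ℕ) : ℤ))) =
      PowerSeries.mk (fun k => ((k/2 + 1 : ℕ) : ℤ))
        - PowerSeries.X^1 * PowerSeries.mk (fun k => ((k/2 + 1 : ℕ) : ℤ))
        - PowerSeries.X^2 * PowerSeries.mk (fun k => ((k/2 + 1 : ℕ) : ℤ))
        + PowerSeries.X^3 * PowerSeries.mk (fun k => ((k/2 + 1 : ℕ) : ℤ)) := by
    ring
  rw [hring]
  ext n
  simp only [map_add, map_sub, PowerSeries.coeff_X_pow_mul', PowerSeries.coeff_mk,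
    PowerSeries.coeff_one]
  split_ifs <;> push_cast <;> omega

/-- For the `A_{2δ-1}` singularity `y² = x^{2δ}` (with `δ`-invariant `δ` and `b = 2`
branches), the multiplicities `n_h = C(δ+h, δ-h)` satisfy: for all `0 ≤ n ≤ δ`, the
coefficient of `q^n` in `∑_{h=0}^{δ} C(δ+h, δ-h) q^{δ-h} (1-q)^{2h}` equals the
coefficient of `q^n` in `(1-q)² · 1/((1-q)(1-q²))`, where the latter series is the
`A_∞` count `#{(a,b) : a + 2b = n}`. -/
theorem A_odd_multiplicities (δ : ℕ) (n : ℕ) (hn : n ≤ δ) :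
    PowerSeries.coeff (R := ℤ) n (∑ h ∈ Finset.range (δ + 1),
        PowerSeries.C (R := ℤ) (((δ + h).choose (δ - h) : ℕ) : ℤ) *
          PowerSeries.X ^ (δ - h) * (1 - PowerSeries.X) ^ (2 * h)) =
    PowerSeries.coeff (R := ℤ) n ((1 - PowerSeries.X) ^ 2 *
      PowerSeries.mk (fun k =>
        ((((Finset.range (k + 1) ×ˢ Finset.range (k + 1)).filter
          (fun p => p.1 + 2 * p.2 = k)).card : ℕ) : ℤ))) := by
  set e : PowerSeries ℤ := PowerSeries.mk (fun n => (-1 : ℤ)^n) with he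
  set R : PowerSeries ℤ := (1 - PowerSeries.X) ^ 2 *
      PowerSeries.mk (fun k =>
        ((((Finset.range (k + 1) ×ˢ Finset.range (k + 1)).filter
          (fun p => p.1 + 2 * p.2 = k)).card : ℕ) : ℤ)) with hR
  have hRe : R = e := by
    calc R = ((1 + PowerSeries.X) * e) * R := by rw [einvAodd, one_mul]
      _ = e * ((1 + PowerSeries.X) * R) := by ring
      _ = e * 1 := by rw [hR, cinvAodd]
      _ = e := mul_one e
  have hL : (∑ h ∈ Finset.range (δ + 1),
      PowerSeries.C (R := ℤ) (((δ + h).choose (δ - h) : ℕ) : ℤ) *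
        PowerSeries.X ^ (δ - h) * (1 - PowerSeries.X) ^ (2 * h)) =
      e + e * PowerSeries.X ^ (2*δ+1) := by
    calc ppAodd δ = ((1 + PowerSeries.X) * e) * ppAodd δ := by rw [einvAodd, one_mul]
      _ = e * ((1 + PowerSeries.X) * ppAodd δ) := by ring
      _ = e * (1 + PowerSeries.X ^ (2*δ+1)) := by rw [keyAodd]
      _ = e + e * PowerSeries.X ^ (2*δ+1) := by ring
  rw [hL, hRe, map_add, PowerSeries.coeff_mul_X_pow', if_neg (by omega), add_zero]
end

section
/- Let a_n be the number of monomial ideals of colength n in C[[x,y]] containing xy², i.e. the number of monomial ideals I whose complement in ℕ² has size n and is contained in {(x,y): y ≤ 1} ∪ {(x,y): x = 0}. Then ∑_{n≥0} a_n q^n = (1-q+q³)/((1-q)²(1-q²)) in Z[[q]]. -/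
/-- The staircase configurations of size `n` for `D_∞`. -/
def Dset (n : ℕ) : Finset (ℕ × ℕ × ℕ) :=
  (Finset.range (n + 1) ×ˢ Finset.range (n + 1) ×ˢ Finset.range (n + 1)).filter
    (fun t => t.1 + t.2.1 + 2 * t.2.2 = n ∧
      (if 0 < t.2.2 then 2 else if 0 < t.2.1 then 1 else 0) ≤ t.1)

lemma mem_Dset {n : ℕ} {t : ℕ × ℕ × ℕ} :
    t ∈ Dset n ↔ t.1 + t.2.1 + 2 * t.2.2 = n ∧
      (0 < t.2.2 → 2 ≤ t.1) ∧ (t.2.2 = 0 → 0 < t.2.1 → 1 ≤ t.1) := by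
  rcases t with ⟨c, a, b⟩
  simp only [Dset, Finset.mem_filter, Finset.mem_product, Finset.mem_range]
  split_ifs with h1 h2 <;> omega

lemma Dset_filter_b_eq_zero (n : ℕ) : (Dset (n+2)).filter (fun t => t.2.2 = 0)
    = Finset.image (fun c => (c, n + 2 - c, 0)) (Finset.Icc 1 (n+2)) := by
  ext ⟨c, a, b⟩
  simp only [Finset.mem_filter, mem_Dset, Finset.mem_image, Finset.mem_Icc, Prod.mk.injEq]
  constructor
  · rintro ⟨⟨hs, hc1, hc2⟩, hb⟩
    exact ⟨c, by omega, rfl, by omega, by omega⟩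
  · rintro ⟨x, hx, rfl, rfl, rfl⟩
    omega

lemma Dset_filter_b_ne_zero (n : ℕ) : (Dset (n+2)).filter (fun t => t.2.2 ≠ 0)
    = Finset.image (fun t : ℕ × ℕ × ℕ => (t.1, t.2.1, t.2.2 + 1))
        ((Dset n).filter (fun t => 2 ≤ t.1)) := by
  ext ⟨c, a, b⟩
  simp only [Finset.mem_filter, mem_Dset, Finset.mem_image, Prod.mk.injEq, ne_eq]
  constructor
  · rintro ⟨⟨hs, hc1, hc2⟩, hb⟩
    refine ⟨(c, a, b - 1), ?_, ?_⟩ <;> dsimp only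
    · exact ⟨⟨by omega, by omega, by omega⟩, by omega⟩
    · exact ⟨rfl, rfl, by omega⟩
  · rintro ⟨⟨c', a', b'⟩, ⟨⟨hs, hc1, hc2⟩, hc⟩, rfl, rfl, rfl⟩
    refine ⟨⟨by omega, by omega, by omega⟩, by omega⟩

lemma Dset_filter_c_lt_two (n : ℕ) : (Dset n).filter (fun t => ¬ 2 ≤ t.1)
    = {if n = 0 then ((0:ℕ), (0:ℕ), (0:ℕ)) else (1, n - 1, 0)} := by
  ext ⟨c, a, b⟩
  simp only [Finset.mem_filter, mem_Dset, Finset.mem_singleton]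
  split_ifs with hn <;> simp only [Prod.mk.injEq] <;> omega

lemma cardDset_step (n : ℕ) : (Dset (n+2)).card = (Dset n).card + (n + 1) := by
  have inj1 : Function.Injective (fun c => (c, n + 2 - c, 0) : ℕ → ℕ × ℕ × ℕ) := by
    intro x y h; simpa using congrArg Prod.fst h
  have inj2 : Function.Injective (fun t : ℕ × ℕ × ℕ => (t.1, t.2.1, t.2.2 + 1)) := by
    rintro ⟨a, b, c⟩ ⟨d, e, f⟩ h
    simp only [Prod.mk.injEq] at h
    simp only [Prod.mk.injEq]; omega
  have e1 := Finset.card_filter_add_card_filter_not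
    (s := Dset (n+2)) (p := fun t => t.2.2 = 0)
  have e2 := Finset.card_filter_add_card_filter_not
    (s := Dset n) (p := fun t => 2 ≤ t.1)
  rw [Dset_filter_b_eq_zero, Dset_filter_b_ne_zero] at e1
  rw [Finset.card_image_of_injective _ inj1, Finset.card_image_of_injective _ inj2,
    Nat.card_Icc] at e1
  rw [Dset_filter_c_lt_two, Finset.card_singleton] at e2
  omega

lemma cardDset_zero : (Dset 0).card = 1 := by decide

lemma cardDset_one : (Dset 1).card = 1 := by decide

lemma cardDset (n : ℕ) : (Dset n).card = n ^ 2 / 4 + 1 := by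
  induction n using Nat.strong_induction_on with
  | _ n ih =>
    match n with
    | 0 => simpa using cardDset_zero
    | 1 => simpa using cardDset_one
    | (m+2) =>
      rw [cardDset_step, ih m (by omega)]
      have h : (m + 2) ^ 2 = m ^ 2 + 4 * m + 4 := by ring
      obtain ⟨K, hK⟩ : ∃ K, m ^ 2 = K := ⟨_, rfl⟩
      rw [h, hK]
      omega

lemma Dinfty_series_part :
    PowerSeries.mk (fun n => ((n ^ 2 / 4 + 1 : ℕ) : ℤ)) *
      ((1 - PowerSeries.X) ^ 2 * (1 - PowerSeries.X ^ 2)) =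
    1 - PowerSeries.X + PowerSeries.X ^ 3 := by
  set f : PowerSeries ℤ := PowerSeries.mk (fun n => ((n ^ 2 / 4 + 1 : ℕ) : ℤ)) with hf
  have hg : f * ((1 - PowerSeries.X) ^ 2 * (1 - PowerSeries.X ^ 2))
      = f - (f * PowerSeries.X ^ 1 + f * PowerSeries.X ^ 1)
        + (f * PowerSeries.X ^ 3 + f * PowerSeries.X ^ 3) - f * PowerSeries.X ^ 4 := by
    ring
  rw [hg]
  ext n
  simp only [map_sub, map_add, PowerSeries.coeff_mul_X_pow', PowerSeries.coeff_mk,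
    PowerSeries.coeff_one, PowerSeries.coeff_X, PowerSeries.coeff_X_pow, hf]
  match n with
  | 0 => norm_num
  | 1 => norm_num
  | 2 => norm_num
  | 3 => norm_num
  | (k+4) =>
    have h4 : (k + 4) ^ 2 = k ^ 2 + 8 * k + 16 := by ring
    have h3 : (k + 4 - 1) ^ 2 = k ^ 2 + 6 * k + 9 := by
      have : k + 4 - 1 = k + 3 := by omega
      rw [this]; ring
    have h1 : (k + 4 - 3) ^ 2 = k ^ 2 + 2 * k + 1 := by
      have : k + 4 - 3 = k + 1 := by omega
      rw [this]; ring
    have h0 : (k + 4 - 4) ^ 2 = k ^ 2 := by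
      have : k + 4 - 4 = k := by omega
      rw [this]
    rw [h4, h3, h1, h0]
    obtain ⟨K, hK⟩ : ∃ K, k ^ 2 = K := ⟨_, rfl⟩
    rw [hK]
    simp only [if_pos, Nat.le_add_left]
    have hne0 : ¬ (k + 4 = 0) := by omega
    have hne1 : ¬ (k + 4 = 1) := by omega
    have hne3 : ¬ (k + 4 = 3) := by omega
    split_ifs <;> first
      | exact ‹False›.elim
      | (push_cast; omega)

/-- The generating function for the Euler numbers of the punctual Hilbert schemes of
`D_∞ : xy² = 0`: monomial ideals of colength `n` in `ℂ⟦x,y⟧` containing `xy²` have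
staircase complements lying in the first two rows together with the first column;
such staircases of size `n` are parameterized by triples `(c,a,b) ∈ ℕ³` (first column
of height `c`, then `a` columns of height `1` and `b` columns of height `2`, with
`c ≥ 2` if `b > 0`, `c ≥ 1` if `b = 0 < a`) with `c + a + 2b = n`.  The claim:
the number of such staircases of size `n` is the `q^n`-coefficient of
`(1 - q + q³)/((1-q)²(1-q²))`, formalized as: the counting series times
`(1-q)²(1-q²)` equals `1 - q + q³` in `ℤ⟦q⟧`. -/
theorem Dinfty_hilbert_series :
    PowerSeries.mk (fun n =>
        ((((Finset.range (n + 1) ×ˢ Finset.range (n + 1) ×ˢ Finset.range (n + 1)).filter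
          (fun t => t.1 + t.2.1 + 2 * t.2.2 = n ∧
            (if 0 < t.2.2 then 2 else if 0 < t.2.1 then 1 else 0) ≤ t.1)).card : ℕ) : ℤ)) *
      ((1 - PowerSeries.X) ^ 2 * (1 - PowerSeries.X ^ 2)) =
    1 - PowerSeries.X + PowerSeries.X ^ 3 := by
  have hmk : PowerSeries.mk (fun n =>
        ((((Finset.range (n + 1) ×ˢ Finset.range (n + 1) ×ˢ Finset.range (n + 1)).filter
          (fun t => t.1 + t.2.1 + 2 * t.2.2 = n ∧
            (if 0 < t.2.2 then 2 else if 0 < t.2.1 then 1 else 0) ≤ t.1)).card : ℕ) : ℤ))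
      = PowerSeries.mk (fun n => ((n ^ 2 / 4 + 1 : ℕ) : ℤ)) := by
    apply PowerSeries.ext
    intro n
    simp only [PowerSeries.coeff_mk]
    exact Nat.cast_inj.mpr (cardDset n)
  rw [hmk]
  exact Dinfty_series_part
end
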